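/- Let $K_n$ be the complete directed acyclic graph on $[n]$ with edges $(i,j)$ for all $i < j$. A subgraph $H \subseteq K_n$ satisfies that $\tilde Q_H$ is a face of $\tilde Q_{K_n}$ if and only if there exist $0 = n_0 < n_1 < \dots < n_{\ell+1} = n$ such that $E(H) = \{(i,j) : n_k < i < j \leq n_{k+1} \text{ for some } k\}$, i.e., $H$ is a disjoint union of complete graphs on consecutive intervals of $[n]$. -/

import Mathlib

/-- The vector `e_i - e_j` associated to the directed edge `e = (i, j)`. -/
def vecOf (n : ℕ) (e : Fin n × Fin n) : Fin n → ℝ :=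
  fun k => (if k = e.1 then 1 else 0) - (if k = e.2 then 1 else 0)

/-- The root polytope `tilde Q_G = conv{0, e_i - e_j : (i,j) ∈ E(G)}`. -/
def tQ (n : ℕ) (E : Set (Fin n × Fin n)) : Set (Fin n → ℝ) :=
  convexHull ℝ ({0} ∪ vecOf n '' E)

/-- `F` is a face of `P`: cut out by a supporting hyperplane. -/
def IsFace (n : ℕ) (P F : Set (Fin n → ℝ)) : Prop :=
  ∃ (c : Fin n → ℝ) (a : ℝ), (∀ x ∈ P, a ≤ ∑ i, c i * x i) ∧
    F = {x ∈ P | ∑ i, c i * x i = a}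

/-- The edge set of the complete directed acyclic graph `K_n` on `[n]`. -/
def KnE (n : ℕ) : Set (Fin n × Fin n) := {e | e.1 < e.2}

/-!
A face of `tQ(K_n)` contains the vertex `0`, so it is cut out by a functional `x ↦ c ⬝ᵥ x` that
is nonnegative on `tQ(K_n)`, i.e. `c i ≥ c j` for `i < j`. The face is the convex hull of the
generators on which the functional vanishes, namely `tQ` of the edges `(i, j)` with
`c i = c j`; as every `e_i - e_j` is a vertex, `tQ` determines a loopless edge set, so `H` is that
graph. The level sets of an antitone `c` are those of the monotone rank map
`k ↦ #{m | c k < c m}`, and conversely `c = -b` exhibits the face for a monotone `b`.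
-/

open Finset

theorem convexHull_sep_eq_of_le {E : Type*} [AddCommGroup E] [Module ℝ E] (f : E →ₗ[ℝ] ℝ)
    {s : Set E} {a : ℝ} (hs : ∀ y ∈ s, a ≤ f y) :
    {x ∈ convexHull ℝ s | f x = a} = convexHull ℝ {y ∈ s | f y = a} := by
  refine Set.Subset.antisymm ?_ fun x hx =>
    ⟨convexHull_mono (Set.sep_subset _ _) hx,
      convexHull_min (fun y hy => hy.2) (convex_hyperplane f.isLinear a) hx⟩
  rintro x ⟨hx, hfx⟩
  obtain ⟨ι, t, w, z, hw₀, hw₁, hz, rfl⟩ := (convexHull_eq s).subset hx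
  have hsum : ∑ i ∈ t, w i * (f (z i) - a) = 0 := by
    rw [centerMass_eq_of_sum_1 _ _ hw₁, map_sum] at hfx
    simp only [map_smul, smul_eq_mul] at hfx
    simp only [mul_sub, sum_sub_distrib, ← sum_mul, hfx, hw₁, one_mul, sub_self]
  have hzero := (sum_eq_zero_iff_of_nonneg fun i hi =>
    mul_nonneg (hw₀ i hi) (sub_nonneg.2 (hs _ (hz i hi)))).1 hsum
  classical
  rw [← centerMass_filter_ne_zero]
  refine centerMass_mem_convexHull _ (fun i hi => hw₀ i (mem_filter.1 hi).1)
    (by rw [sum_filter_ne_zero, hw₁]; exact one_pos) fun i hi => ?_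
  obtain ⟨hit, hwi⟩ := mem_filter.1 hi
  have := hzero i hit
  rw [mul_eq_zero, sub_eq_zero] at this
  exact ⟨hz i hit, this.resolve_left hwi⟩

theorem Antitone.exists_monotone_nat_eq_iff_eq {α β : Type*} [Fintype α] [Preorder α]
    [LinearOrder β] {c : α → β} (hc : Antitone c) :
    ∃ b : α → ℕ, Monotone b ∧ ∀ i j, b i = b j ↔ c i = c j := by
  classical
  have card_lt : ∀ {i j}, c i < c j →
      #{m | c j < c m} < #{m | c i < c m} := fun {i j} h =>
    card_lt_card <| ssubset_iff_of_subset
      (monotone_filter_right _ fun _ _ => h.trans) |>.2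
      ⟨j, by simpa using h, by simp⟩
  refine ⟨fun k => #{m | c k < c m}, fun i j hij => ?_, fun i j => ⟨fun h => ?_, fun h => ?_⟩⟩
  · exact card_le_card (monotone_filter_right _ fun _ _ => (hc hij).trans_lt)
  · by_contra hne
    rcases lt_or_gt_of_ne hne with hlt | hlt
    · exact (card_lt hlt).ne' h
    · exact (card_lt hlt).ne h
  · simp only [h]

variable {n : ℕ}

theorem dotProduct_vecOf (c : Fin n → ℝ) (e : Fin n × Fin n) :
    c ⬝ᵥ vecOf n e = c e.1 - c e.2 := by
  simp [dotProduct, vecOf, mul_sub, sum_sub_distrib]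

theorem vecOf_mem_tQ_iff {E : Set (Fin n × Fin n)} {e : Fin n × Fin n} (he : e.1 ≠ e.2) :
    vecOf n e ∈ tQ n E ↔ e ∈ E := by
  refine ⟨fun hmem => ?_, fun h => subset_convexHull _ _ (Or.inr ⟨e, h, rfl⟩)⟩
  by_contra hnot
  -- `e_i - e_j` pairs to 2 with itself but to at most 1 with every other generator.
  have hgen : ∀ y ∈ ({0} ∪ vecOf n '' E : Set (Fin n → ℝ)), vecOf n e ⬝ᵥ y ≤ 1 := by
    rintro _ (rfl | ⟨e', he', rfl⟩)
    · simp
    · have : e'.1 ≠ e.1 ∨ e'.2 ≠ e.2 := by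
        by_contra! h
        exact hnot (Prod.ext h.1 h.2 ▸ he')
      rw [dotProduct_vecOf]
      simp only [vecOf]
      rcases this with h | h <;> split_ifs <;> simp_all <;> norm_num
  have : vecOf n e ⬝ᵥ vecOf n e ≤ 1 :=
    convexHull_min hgen (convex_halfSpace_le (dotProductEquiv ℝ (Fin n) _).isLinear 1) hmem
  rw [dotProduct_vecOf] at this
  simp only [vecOf, if_pos, if_neg he, if_neg he.symm] at this
  norm_num at this

theorem tQ_injOn : Set.InjOn (tQ n) {E | ∀ e ∈ E, e.1 ≠ e.2} := by
  intro E hE E' hE' h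
  ext e
  exact ⟨fun he => (vecOf_mem_tQ_iff (hE e he)).1 (h ▸ (vecOf_mem_tQ_iff (hE e he)).2 he),
    fun he => (vecOf_mem_tQ_iff (hE' e he)).1 (h ▸ (vecOf_mem_tQ_iff (hE' e he)).2 he)⟩

section SupportingFunctional

variable {E : Set (Fin n × Fin n)} {c : Fin n → ℝ} (hc : ∀ e ∈ E, c e.2 ≤ c e.1)
include hc

theorem dotProduct_nonneg_of_mem_tQ {x : Fin n → ℝ} (hx : x ∈ tQ n E) : 0 ≤ c ⬝ᵥ x := by
  refine convexHull_min ?_ (convex_halfSpace_ge (dotProductEquiv ℝ (Fin n) c).isLinear 0) hx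
  rintro _ (rfl | ⟨e, he, rfl⟩)
  · simp
  · simpa [dotProduct_vecOf] using hc e he

theorem tQ_sep_dotProduct_eq_zero :
    {x ∈ tQ n E | c ⬝ᵥ x = 0} = tQ n {e ∈ E | c e.1 = c e.2} := by
  have h := convexHull_sep_eq_of_le (dotProductEquiv ℝ (Fin n) c)
    fun y hy => dotProduct_nonneg_of_mem_tQ hc (subset_convexHull ℝ _ hy)
  simp only [dotProductEquiv_apply_apply] at h
  rw [tQ, h, tQ]
  congr 1
  ext y
  constructor
  · rintro ⟨rfl | ⟨e, he, rfl⟩, hy⟩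
    · exact Or.inl rfl
    · rw [dotProduct_vecOf, sub_eq_zero] at hy
      exact Or.inr ⟨e, ⟨he, hy⟩, rfl⟩
  · rintro (rfl | ⟨e, ⟨he, hce⟩, rfl⟩)
    · exact ⟨Or.inl rfl, dotProduct_zero c⟩
    · exact ⟨Or.inr ⟨e, he, rfl⟩, by rw [dotProduct_vecOf, hce, sub_self]⟩

end SupportingFunctional

/-- `tilde Q_H` is a face of `tilde Q_{K_n}` iff `H` is a disjoint union of complete graphs
on consecutive intervals of `[n]` (the intervals being the level sets of a monotone map `b`). -/
theorem stmt17 (n : ℕ) (EH : Set (Fin n × Fin n)) (hH : EH ⊆ KnE n) :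
    IsFace n (tQ n (KnE n)) (tQ n EH) ↔
      ∃ b : Fin n → ℕ, Monotone b ∧
        EH = {e : Fin n × Fin n | e.1 < e.2 ∧ b e.1 = b e.2} := by
  constructor
  · rintro ⟨c, a, hsupp, hface⟩
    obtain rfl : a = 0 := by
      have h0 : (0 : Fin n → ℝ) ∈ tQ n EH := subset_convexHull ℝ _ (Or.inl rfl)
      rw [hface] at h0
      simpa using h0.2.symm
    have hc : ∀ e ∈ KnE n, c e.2 ≤ c e.1 := fun e he => by
      have : 0 ≤ c ⬝ᵥ vecOf n e := hsupp _ (subset_convexHull ℝ _ (Or.inr ⟨e, he, rfl⟩))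
      rwa [dotProduct_vecOf, sub_nonneg] at this
    have hEH : EH = {e ∈ KnE n | c e.1 = c e.2} :=
      tQ_injOn (fun e he => (hH he).ne) (fun e he => he.1.ne)
        (hface.trans (tQ_sep_dotProduct_eq_zero hc))
    have hanti : Antitone c := fun i j hij =>
      hij.eq_or_lt.elim (fun h => h ▸ le_rfl) fun h => hc (i, j) h
    obtain ⟨b, hb, hbc⟩ := hanti.exists_monotone_nat_eq_iff_eq
    exact ⟨b, hb, hEH.trans (by simp [KnE, hbc])⟩
  · rintro ⟨b, hb, rfl⟩
    have hc : ∀ e ∈ KnE n, -(b e.2 : ℝ) ≤ -b e.1 := fun e he => by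
      simpa using hb he.le
    refine ⟨fun k => -(b k : ℝ), 0, fun x hx => dotProduct_nonneg_of_mem_tQ hc hx, ?_⟩
    refine Eq.trans ?_ (tQ_sep_dotProduct_eq_zero hc).symm
    simp [KnE]
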